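/- arXiv:2305.12481 — 6 statements merged into one kernel-verified Lean document; each statement's English description precedes it below -/
import Mathlib

section
/- Let n ≥ 1, let Q₀ be a positive integer, and let P, Q ∈ ℤ^{n×n} satisfy P·Q = Q₀·I_n. Let u′, e ∈ ℤⁿ and c ∈ ℤⁿ be such that u′ − e = P·c. Then for every x′ ∈ ℤⁿ, we have P·x′ ≡ u′ − e (mod Q₀) — i.e. P·x′ − (u′ − e) ∈ Q₀·ℤⁿ — if and only if x′ ∈ Q·ℤⁿ + c. (Correctness of the semi-random gadget sampler: the set of valid preimages for the target u′ with error e is exactly the lattice coset L(Q) + c.) -/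
/-- From `P * Q = Q₀ • 1` over ℤ with `Q₀ ≠ 0`, deduce `Q * P = Q₀ • 1`. -/
lemma qp_comm (n : ℕ) (Q₀ : ℤ) (hQ₀ : Q₀ ≠ 0)
    (P Q : Matrix (Fin n) (Fin n) ℤ)
    (hPQ : P * Q = Q₀ • (1 : Matrix (Fin n) (Fin n) ℤ)) :
    Q * P = Q₀ • (1 : Matrix (Fin n) (Fin n) ℤ) := by
  set f := (Int.castRingHom ℚ).mapMatrix (m := Fin n)
  have hinj : Function.Injective f := by
    intro A B h
    ext i j
    have hij : ((A i j : ℚ)) = ((B i j : ℚ)) := congrFun (congrFun h i) j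
    exact_mod_cast hij
  apply hinj
  set P' := f P
  set Q' := f Q
  have hQ₀' : (Q₀ : ℚ) ≠ 0 := Int.cast_ne_zero.mpr hQ₀
  have hsmul : f (Q₀ • (1 : Matrix (Fin n) (Fin n) ℤ)) = (Q₀ : ℚ) • (1 : Matrix (Fin n) (Fin n) ℚ) := by
    rw [map_zsmul, map_one, Int.cast_smul_eq_zsmul]
  have hPQ' : P' * Q' = (Q₀ : ℚ) • (1 : Matrix (Fin n) (Fin n) ℚ) := by
    rw [← hsmul, ← hPQ, map_mul]
  have h1 : P' * ((Q₀ : ℚ)⁻¹ • Q') = 1 := by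
    rw [Matrix.mul_smul, hPQ', smul_smul, inv_mul_cancel₀ hQ₀', one_smul]
  have h2 : ((Q₀ : ℚ)⁻¹ • Q') * P' = 1 := mul_eq_one_comm.mp h1
  have h3 : Q' * P' = (Q₀ : ℚ) • (1 : Matrix (Fin n) (Fin n) ℚ) := by
    have := congrArg (fun M => (Q₀ : ℚ) • M) h2
    simpa [Matrix.smul_mul, smul_smul, mul_inv_cancel₀ hQ₀'] using this
  rw [map_mul, hsmul]
  exact h3

/-- **Correctness of the semi-random gadget sampler.**
For `P * Q = Q₀ • 1` and a target `u'` with error `e` and `u' - e = P ⬝ c`,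
the valid preimages `x'` (those with `P ⬝ x' ≡ u' - e (mod Q₀)`) are exactly the
elements of the lattice coset `Q ⬝ ℤⁿ + c`. -/
theorem stmt_0 (n : ℕ) (hn : 1 ≤ n) (Q₀ : ℤ) (hQ₀ : 0 < Q₀)
    (P Q : Matrix (Fin n) (Fin n) ℤ)
    (hPQ : P * Q = Q₀ • (1 : Matrix (Fin n) (Fin n) ℤ))
    (u' e c : Fin n → ℤ) (huec : u' - e = P.mulVec c) :
    ∀ x' : Fin n → ℤ,
      (∀ i, Q₀ ∣ (P.mulVec x' i - (u' - e) i)) ↔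
        ∃ v : Fin n → ℤ, x' = Q.mulVec v + c := by
  have hQP := qp_comm n Q₀ hQ₀.ne' P Q hPQ
  intro x'
  constructor
  · intro h
    -- choose w with P.mulVec (x' - c) = Q₀ • w
    choose w hw using fun i => h i
    refine ⟨w, ?_⟩
    have hPw : P.mulVec (x' - c) = Q₀ • w := by
      funext i
      have : P.mulVec x' i - P.mulVec c i = Q₀ * w i := by
        rw [← huec]; exact hw i
      have hsub : P.mulVec (x' - c) i = P.mulVec x' i - P.mulVec c i := by
        simp [Matrix.mulVec_sub]
      simp [hsub, this, Pi.smul_apply, smul_eq_mul]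
    have hkey : Q₀ • (x' - c) = Q₀ • Q.mulVec w := by
      calc Q₀ • (x' - c) = (Q₀ • (1 : Matrix (Fin n) (Fin n) ℤ)).mulVec (x' - c) := by
            simp [Matrix.smul_mulVec]
        _ = (Q * P).mulVec (x' - c) := by rw [hQP]
        _ = Q.mulVec (P.mulVec (x' - c)) := by rw [← Matrix.mulVec_mulVec]
        _ = Q.mulVec (Q₀ • w) := by rw [hPw]
        _ = Q₀ • Q.mulVec w := by rw [Matrix.mulVec_smul]
    have : x' - c = Q.mulVec w := by
      funext i
      have := congrFun hkey i
      simp only [Pi.smul_apply, smul_eq_mul] at this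
      exact mul_left_cancel₀ hQ₀.ne' this
    exact sub_eq_iff_eq_add.mp this
  · rintro ⟨v, rfl⟩ i
    refine ⟨v i, ?_⟩
    have : P.mulVec (Q.mulVec v + c) = Q₀ • v + P.mulVec c := by
      rw [Matrix.mulVec_add, Matrix.mulVec_mulVec, hPQ, Matrix.smul_mulVec]
      simp
    rw [this, huec]
    simp [smul_eq_mul]
end

section
/- Let p, q be positive integers, Q₀ = p·q, n ≥ 1, ε ∈ (0, 1/2), and r > 0 with ρ_{q/r}(ℤⁿ) ≤ 1 + ε (i.e. r ≥ η_ε(q·ℤⁿ)). Identify ℤ_{Q₀} and ℤ_p with their sets of centered integer representatives. Define two probability distributions on triples (x′, u′, e) ∈ ℤⁿ × ℤ_{Q₀}ⁿ × ℤ_pⁿ: (Distribution 1) sample u′ uniformly from ℤ_{Q₀}ⁿ; let e ∈ ℤ_pⁿ be the unique vector with u′ − e ∈ p·ℤⁿ, let c = (u′ − e)/p, and sample x′ from the discrete Gaussian D_{q·ℤⁿ + c, r}; (Distribution 2) sample e uniformly from ℤ_pⁿ, sample x′ from D_{ℤⁿ, r}, and set u′ = e + p·x′ mod Q₀. Then the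 two distributions have the same support {(x′, u′, e) : u′ = e + p·x′ mod Q₀}, and for every triple in this support the probability assigned by Distribution 1 lies in the interval [(1−ε)/(1+ε), (1+ε)/(1−ε)] times the probability assigned by Distribution 2. In particular Distribution 1 assigns the triple probability Q₀^{−n}·ρ_r(x′)/ρ_r(q·ℤⁿ + c) and Distribution 2 assigns it probability (qⁿ/Q₀ⁿ)·ρ_r(x′)/ρ_r(ℤⁿ). -/
open Classical

/-- The Gaussian function of width `s`: `ρ_s(x) = exp(-π ‖x‖² / s²)`. -/
noncomputable def gaussF (n : ℕ) (s : ℝ) (x : Fin n → ℝ) : ℝ :=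
  Real.exp (-Real.pi * (∑ i, x i ^ 2) / s ^ 2)

/-- Gaussian mass `ρ_s(ℤⁿ)`. -/
noncomputable def rhoZn (n : ℕ) (s : ℝ) : ℝ :=
  ∑' z : Fin n → ℤ, gaussF n s (fun i => (z i : ℝ))

/-- Gaussian mass `ρ_s(q·ℤⁿ + c)` of a coset of `q·ℤⁿ`. -/
noncomputable def rhoCoset (n : ℕ) (s : ℝ) (q : ℤ) (c : Fin n → ℤ) : ℝ :=
  ∑' z : Fin n → ℤ, gaussF n s (fun i => ((q * z i + c i : ℤ) : ℝ))

/-- Distribution 1 of the semi-random gadget sampler (for `P = p·I`, `Q = q·I`,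
`Q₀ = p·q`): sample `u'` uniformly from the centered representatives `ℤ_{Q₀}ⁿ`
(probability `Q₀^{-n}` each), let `e` be the centered residue of `u'` mod `p`,
let `c = (u'-e)/p`, and sample `x'` from the discrete Gaussian `D_{q·ℤⁿ+c, r}`.
The resulting probability of the triple `(x', u', e)`. -/

noncomputable def Dist1 (n p q Q₀ : ℕ) (r : ℝ) (x' u' e : Fin n → ℤ) : ℝ :=
  if (∀ i, u' i = (u' i).bmod Q₀) ∧ (∀ i, e i = (u' i).bmod p) ∧
      (∃ v : Fin n → ℤ, x' = fun i => (q : ℤ) * v i + (u' i - e i) / (p : ℤ)) then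
    ((1 : ℝ) / (Q₀ : ℝ) ^ n) * gaussF n r (fun i => (x' i : ℝ)) /
      rhoCoset n r (q : ℤ) (fun i => (u' i - e i) / (p : ℤ))
  else 0

/-- Distribution 2 (the trapdoor-free simulation): sample `e` uniformly from the
centered representatives `ℤ_pⁿ`, sample `x'` from `D_{ℤⁿ, r}`, and set
`u' = e + p·x' mod Q₀` (centered representative).
The resulting probability of the triple `(x', u', e)`. -/

noncomputable def Dist2 (n p q Q₀ : ℕ) (r : ℝ) (x' u' e : Fin n → ℤ) : ℝ :=
  if (∀ i, e i = (e i).bmod p) ∧ (∀ i, u' i = (e i + (p : ℤ) * x' i).bmod Q₀) then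
    ((q : ℝ) ^ n / (Q₀ : ℝ) ^ n) * gaussF n r (fun i => (x' i : ℝ)) / rhoZn n r
  else 0

open Real Finset

/-!
On the common support `u' ≡ e + p x' (mod Q₀)` the ratio of the two probabilities is
`ρ_r(ℤⁿ) / (qⁿ ρ_r(qℤⁿ + c))`. Both masses factor over the coordinates, and by Poisson summation
a one-dimensional coset mass satisfies `s (2 - ρ_{1/s}(ℤ)) ≤ ρ_s(ℤ + t) ≤ s ρ_{1/s}(ℤ)`.
With `s = r/q` and `θ = ρ_{q/r}(ℤ)`, smoothness says `θⁿ ≤ 1 + ε`, and convexity gives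
`(2 - θ)ⁿ ≥ 2 - θⁿ ≥ 1 - ε`; hence `qⁿ ρ_r(qℤⁿ + c)` and `ρ_r(ℤⁿ)` (the case `q = 1`) both lie in
`rⁿ [1 - ε, 1 + ε]`.
-/

/-- `ρ_s(ℤ + t)` -/
noncomputable def rhoIntShift (s t : ℝ) : ℝ := ∑' n : ℤ, exp (-π * (n + t) ^ 2 / s ^ 2)

lemma summable_exp_neg_mul_add_sq {c : ℝ} (hc : 0 < c) (t : ℝ) :
    Summable fun n : ℤ => exp (-c * (n + t) ^ 2) := by
  have hθ := ((summable_jacobiTheta₂_term_iff (Complex.I * (c * t / π : ℝ))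
    (Complex.I * (c / π : ℝ))).mpr (by simp; positivity)).norm.mul_left (exp (-c * t ^ 2))
  refine hθ.congr fun n => ?_
  rw [norm_jacobiTheta₂_term, ← exp_add, Complex.I_mul_im, Complex.I_mul_im, Complex.ofReal_re,
    Complex.ofReal_re]
  congr 1
  field_simp
  ring

lemma summable_exp_neg_pi_mul_add_sq_div {s : ℝ} (hs : s ≠ 0) (t : ℝ) :
    Summable fun n : ℤ => exp (-π * (n + t) ^ 2 / s ^ 2) := by
  refine (summable_exp_neg_mul_add_sq (c := π / s ^ 2) (by positivity) t).congr fun n => ?_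
  ring_nf

lemma gaussian_phase_eq (s t : ℝ) (n : ℤ) :
    -(π : ℂ) * (s ^ 2 : ℝ) * n ^ 2 + 2 * π * (-Complex.I * t) * n
      = ((-π * n ^ 2 / s⁻¹ ^ 2 : ℝ) : ℂ) + ((-(2 * π * t * n) : ℝ) : ℂ) * Complex.I := by
  push_cast
  field_simp

lemma ofReal_rhoIntShift_eq_mul_tsum {s : ℝ} (hs : 0 < s) (t : ℝ) :
    (rhoIntShift s t : ℂ) = s * ∑' n : ℤ,
      Complex.exp (-(π : ℂ) * (s ^ 2 : ℝ) * n ^ 2 + 2 * π * (-Complex.I * t) * n) := by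
  -- Jacobi's transformation with `a = s²`, `b = -I t` turns the shift `t` into a phase.
  have hpoisson := Complex.tsum_exp_neg_quadratic (a := (s ^ 2 : ℝ))
    (by rw [Complex.ofReal_re]; positivity) (-Complex.I * t)
  have hsqrt : ((s ^ 2 : ℝ) : ℂ) ^ (1 / 2 : ℂ) = s := by
    rw [show (1 / 2 : ℂ) = ((1 / 2 : ℝ) : ℂ) by push_cast; ring,
      ← Complex.ofReal_cpow (by positivity), ← Real.sqrt_eq_rpow, Real.sqrt_sq hs.le]
  have hshift : ∑' n : ℤ,
      Complex.exp (-π / ((s ^ 2 : ℝ) : ℂ) * (n + Complex.I * (-Complex.I * t)) ^ 2)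
        = (rhoIntShift s t : ℂ) := by
    rw [rhoIntShift, Complex.ofReal_tsum]
    refine tsum_congr fun n => ?_
    rw [Complex.ofReal_exp, ← mul_assoc, mul_neg, Complex.I_mul_I]
    push_cast
    ring_nf
  rw [hsqrt, hshift] at hpoisson
  rw [hpoisson, ← mul_assoc, mul_one_div_cancel (by exact_mod_cast hs.ne'), one_mul]

lemma rhoIntShift_eq_tsum_mul_cos {s : ℝ} (hs : 0 < s) (t : ℝ) :
    rhoIntShift s t = s * ∑' n : ℤ, exp (-π * n ^ 2 / s⁻¹ ^ 2) * cos (2 * π * t * n) := by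
  have hre : ∀ n : ℤ, (Complex.exp (-(π : ℂ) * (s ^ 2 : ℝ) * n ^ 2 +
      2 * π * (-Complex.I * t) * n)).re = exp (-π * n ^ 2 / s⁻¹ ^ 2) * cos (2 * π * t * n) := by
    intro n
    rw [gaussian_phase_eq, Complex.exp_re, Complex.add_re, Complex.add_im, Complex.mul_I_re,
      Complex.mul_I_im, Complex.ofReal_re, Complex.ofReal_im, Complex.ofReal_im,
      Complex.ofReal_re]
    simp
  have hsum : Summable fun n : ℤ => Complex.exp (-(π : ℂ) * (s ^ 2 : ℝ) * n ^ 2 +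
      2 * π * (-Complex.I * t) * n) := by
    refine Summable.of_norm ((summable_exp_neg_pi_mul_add_sq_div (inv_ne_zero hs.ne') 0).congr
      fun n => ?_)
    rw [Complex.norm_exp, gaussian_phase_eq, Complex.add_re, Complex.re_ofReal_mul, Complex.I_re,
      Complex.ofReal_re]
    simp
  rw [← Complex.ofReal_re (rhoIntShift s t), ofReal_rhoIntShift_eq_mul_tsum hs,
    Complex.re_ofReal_mul, Complex.re_tsum hsum]
  exact congrArg (s * ·) (tsum_congr hre)

lemma tsum_mul_mem_Icc_of_abs_le_one {α : Type*} {w c : α → ℝ} (hw : Summable w)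
    (hw0 : ∀ n, 0 ≤ w n) (hc : ∀ n, |c n| ≤ 1) (a : α) (hca : c a = 1) :
    ∑' n, w n * c n ∈ Set.Icc (2 * w a - ∑' n, w n) (∑' n, w n) := by
  have hwc_le : ∀ n, w n * c n ≤ w n := fun n =>
    mul_le_of_le_one_right (hw0 n) (le_of_abs_le (hc n))
  have hwc : Summable fun n => w n * c n :=
    hw.of_norm_bounded fun n => by
      rw [Real.norm_eq_abs, abs_mul, abs_of_nonneg (hw0 n)]
      exact mul_le_of_le_one_right (hw0 n) (hc n)
  refine ⟨?_, hwc.tsum_le_tsum hwc_le hw⟩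
  have hsum_nonneg : ∀ n, 0 ≤ w n + w n * c n := fun n => by
    nlinarith [neg_abs_le (c n), hc n, hw0 n]
  have h := (hw.add hwc).le_tsum a fun n _ => hsum_nonneg n
  rw [hca, mul_one, hw.tsum_add hwc] at h
  linarith

lemma rhoIntShift_mem_Icc {s : ℝ} (hs : 0 < s) (t : ℝ) :
    rhoIntShift s t ∈ Set.Icc (s * (2 - rhoIntShift s⁻¹ 0)) (s * rhoIntShift s⁻¹ 0) := by
  have h := tsum_mul_mem_Icc_of_abs_le_one
    (summable_exp_neg_pi_mul_add_sq_div (inv_ne_zero hs.ne') 0) (fun n => (exp_pos _).le)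
    (fun n => abs_cos_le_one (2 * π * t * n)) 0 (by simp)
  simp only [add_zero, Int.cast_zero, ne_eq, OfNat.ofNat_ne_zero, not_false_eq_true,
    zero_pow, mul_zero, zero_div, exp_zero, mul_one] at h
  rw [rhoIntShift_eq_tsum_mul_cos hs]
  simp only [rhoIntShift, add_zero]
  exact ⟨mul_le_mul_of_nonneg_left h.1 hs.le, mul_le_mul_of_nonneg_left h.2 hs.le⟩

lemma one_le_rhoIntShift_zero {s : ℝ} (hs : s ≠ 0) : 1 ≤ rhoIntShift s 0 := by
  have h := (summable_exp_neg_pi_mul_add_sq_div hs 0).le_tsum 0 fun n _ => (exp_pos _).le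
  simpa [rhoIntShift] using h

lemma rhoIntShift_zero_le_of_le {s s' : ℝ} (hs : 0 < s) (h : s ≤ s') :
    rhoIntShift s 0 ≤ rhoIntShift s' 0 := by
  refine (summable_exp_neg_pi_mul_add_sq_div hs.ne' 0).tsum_le_tsum (fun n => ?_)
    (summable_exp_neg_pi_mul_add_sq_div (hs.trans_le h).ne' 0)
  rw [exp_le_exp, neg_mul, neg_div, neg_div, neg_le_neg_iff]
  gcongr

lemma hasSum_pi_prod_of_nonneg {α : Type*} {n : ℕ} (f : Fin n → α → ℝ)
    (hf : ∀ i, Summable (f i)) (hf0 : ∀ i a, 0 ≤ f i a) :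
    HasSum (fun z : Fin n → α => ∏ i, f i (z i)) (∏ i, ∑' a, f i a) := by
  induction n with
  | zero => simp
  | succ n ih =>
    have htail : HasSum (fun z : Fin n → α => ∏ i, f i.succ (z i))
        (∏ i : Fin n, ∑' a, f i.succ a) :=
      ih (fun i => f i.succ) (fun i => hf i.succ) fun i => hf0 i.succ
    have htail0 : 0 ≤ fun z : Fin n → α => ∏ i, f i.succ (z i) :=
      fun z => prod_nonneg fun i _ => hf0 i.succ (z i)
    have hhead0 : 0 ≤ f 0 := hf0 0
    have hprod := (hf 0).mul_of_nonneg htail.summable hhead0 htail0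
    have hmul := (hf 0).hasSum.mul htail hprod
    rw [Fin.prod_univ_succ, ← (Fin.consEquiv fun _ => α).hasSum_iff]
    refine hmul.congr_fun fun x => ?_
    simp [Fin.prod_univ_succ]

lemma gaussF_pos (n : ℕ) (s : ℝ) (x : Fin n → ℝ) : 0 < gaussF n s x :=
  exp_pos _

lemma gaussF_eq_prod (n : ℕ) (s : ℝ) (x : Fin n → ℝ) :
    gaussF n s x = ∏ i, exp (-π * x i ^ 2 / s ^ 2) := by
  rw [gaussF, ← exp_sum, ← sum_div, ← mul_sum]

lemma rhoCoset_eq_prod (n : ℕ) {s : ℝ} (hs : s ≠ 0) {q : ℤ} (hq : q ≠ 0) (c : Fin n → ℤ) :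
    rhoCoset n s q c = ∏ i, rhoIntShift (s / q) (c i / q) := by
  have hterm : ∀ (a : ℤ) (z : ℤ), exp (-π * ((q * z + a : ℤ) : ℝ) ^ 2 / s ^ 2)
      = exp (-π * (z + a / q) ^ 2 / (s / q) ^ 2) := by
    intro a z
    have : (q : ℝ) ≠ 0 := by exact_mod_cast hq
    push_cast
    field_simp
  simp_rw [rhoCoset, gaussF_eq_prod, hterm]
  exact (hasSum_pi_prod_of_nonneg _ (fun i => summable_exp_neg_pi_mul_add_sq_div
    (div_ne_zero hs (by exact_mod_cast hq)) _) fun i z => (exp_pos _).le).tsum_eq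

lemma rhoZn_eq_rhoCoset (n : ℕ) (s : ℝ) : rhoZn n s = rhoCoset n s 1 0 := by
  simp [rhoZn, rhoCoset]

lemma rhoZn_eq_pow (n : ℕ) {s : ℝ} (hs : s ≠ 0) : rhoZn n s = rhoIntShift s 0 ^ n := by
  simp [rhoZn_eq_rhoCoset, rhoCoset_eq_prod n hs one_ne_zero]

lemma two_sub_pow_le_two_sub_pow {θ : ℝ} (h1 : 1 ≤ θ) {n : ℕ} (h2 : θ ^ n ≤ 2) :
    2 - θ ^ n ≤ (2 - θ) ^ n := by
  rcases Nat.eq_zero_or_pos n with rfl | hn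
  · norm_num
  have hθ2 : θ ≤ 2 := (le_self_pow₀ h1 hn.ne').trans h2
  have h := add_pow_le (sub_nonneg.2 hθ2) (zero_le_one.trans h1) n
  rw [sub_add_cancel, ← Nat.sub_add_cancel hn, pow_succ, Nat.sub_add_cancel hn] at h
  nlinarith [pow_pos (two_pos (α := ℝ)) (n - 1)]

lemma pow_mul_rhoCoset_mem_Icc (n : ℕ) {r ε : ℝ} (hr : 0 < r) {q : ℕ} (hq : 0 < q) (hε : ε ≤ 1)
    (hsmooth : rhoZn n (q / r) ≤ 1 + ε) (c : Fin n → ℤ) :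
    (q : ℝ) ^ n * rhoCoset n r q c ∈ Set.Icc (r ^ n * (1 - ε)) (r ^ n * (1 + ε)) := by
  have hq' : (0 : ℝ) < q := by exact_mod_cast hq
  set θ := rhoIntShift (q / r) 0
  have hθ1 : 1 ≤ θ := one_le_rhoIntShift_zero (by positivity)
  have hθn : θ ^ n ≤ 1 + ε := by rwa [rhoZn_eq_pow n (by positivity)] at hsmooth
  have hθ2 : ∀ i : Fin n, θ ≤ 2 := fun i => (le_self_pow₀ hθ1 i.pos.ne').trans (by linarith)
  have hfactor : ∀ i, q * rhoIntShift (r / q) (c i / q) ∈ Set.Icc (r * (2 - θ)) (r * θ) := by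
    intro i
    obtain ⟨hlo, hhi⟩ := rhoIntShift_mem_Icc (div_pos hr hq') (c i / q)
    rw [inv_div] at hlo hhi
    have hqr : (q : ℝ) * (r / q) = r := mul_div_cancel₀ r hq'.ne'
    constructor
    · simpa only [← mul_assoc, hqr] using mul_le_mul_of_nonneg_left hlo hq'.le
    · simpa only [← mul_assoc, hqr] using mul_le_mul_of_nonneg_left hhi hq'.le
  have hprod : (q : ℝ) ^ n * rhoCoset n r q c = ∏ i, q * rhoIntShift (r / q) (c i / q) := by
    rw [rhoCoset_eq_prod n hr.ne' (by exact_mod_cast hq.ne'), prod_mul_distrib, prod_const,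
      card_univ, Fintype.card_fin]
    simp
  rw [hprod]
  have hlow_nonneg : ∀ i : Fin n, 0 ≤ r * (2 - θ) := fun i => mul_nonneg hr.le (by linarith [hθ2 i])
  constructor
  · calc r ^ n * (1 - ε) ≤ r ^ n * (2 - θ) ^ n := by
          gcongr
          linarith [two_sub_pow_le_two_sub_pow hθ1 (n := n) (by linarith)]
      _ = ∏ _i : Fin n, r * (2 - θ) := by simp [mul_pow]
      _ ≤ _ := prod_le_prod (fun i _ => hlow_nonneg i) fun i _ => (hfactor i).1
  · calc ∏ i, q * rhoIntShift (r / q) (c i / q) ≤ ∏ _i : Fin n, r * θ := prod_le_prod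
          (fun i _ => (hlow_nonneg i).trans (hfactor i).1) fun i _ => (hfactor i).2
      _ = r ^ n * θ ^ n := by simp [mul_pow]
      _ ≤ r ^ n * (1 + ε) := by gcongr

lemma rhoZn_le_rhoZn (n : ℕ) {s s' : ℝ} (hs : 0 < s) (h : s ≤ s') : rhoZn n s ≤ rhoZn n s' := by
  rw [rhoZn_eq_pow n hs.ne', rhoZn_eq_pow n (hs.trans_le h).ne']
  exact pow_le_pow_left₀ (zero_le_one.trans (one_le_rhoIntShift_zero hs.ne'))
    (rhoIntShift_zero_le_of_le hs h) n

lemma rhoZn_mem_Icc (n : ℕ) {r ε : ℝ} (hr : 0 < r) {q : ℕ} (hq : 0 < q) (hε : ε ≤ 1)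
    (hsmooth : rhoZn n (q / r) ≤ 1 + ε) :
    rhoZn n r ∈ Set.Icc (r ^ n * (1 - ε)) (r ^ n * (1 + ε)) := by
  have hsmooth_one : rhoZn n ((1 : ℕ) / r) ≤ 1 + ε :=
    (rhoZn_le_rhoZn n (by positivity) (by gcongr; exact_mod_cast hq)).trans hsmooth
  simpa [rhoZn_eq_rhoCoset] using pow_mul_rhoCoset_mem_Icc n hr one_pos hε hsmooth_one 0

lemma bmod_mul_decomposition_iff {p q : ℕ} (hp : 0 < p) (x u e : ℤ) :
    (u = u.bmod (p * q) ∧ e = u.bmod p ∧ ∃ v : ℤ, x = q * v + (u - e) / p) ↔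
      (e = e.bmod p ∧ u = (e + p * x).bmod (p * q)) := by
  have hp' : (p : ℤ) ≠ 0 := by exact_mod_cast hp.ne'
  constructor
  · rintro ⟨hu, he, v, rfl⟩
    have hdvd : (p : ℤ) ∣ u - e := by
      simpa [he] using (Int.dvd_bmod_sub_self (x := u) (m := p)).neg_right
    have hsum : e + p * (q * v + (u - e) / p) = u + ((p * q : ℕ) : ℤ) * v := by
      rw [mul_add, Int.mul_ediv_cancel' hdvd]
      push_cast
      ring
    refine ⟨by rw [he, Int.bmod_bmod], ?_⟩
    rw [hsum, Int.add_mul_bmod_self_left, ← hu]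
  · rintro ⟨he, hu⟩
    obtain ⟨k, hk⟩ := Int.dvd_bmod_sub_self (x := e + p * x) (m := p * q)
    rw [← hu] at hk
    have hue : u - e = p * (x + q * k) := by
      push_cast at hk
      linear_combination hk
    refine ⟨by rw [hu, Int.bmod_bmod], ?_, -k, ?_⟩
    · rw [hu, Int.bmod_bmod_of_dvd (dvd_mul_right p q), Int.add_mul_bmod_self_left, ← he]
    · rw [hue, Int.mul_ediv_cancel_left _ hp']
      ring

lemma dist1_cond_iff_dist2_cond {n p q Q₀ : ℕ} (hp : 0 < p) (hQ₀ : Q₀ = p * q)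
    (x' u' e : Fin n → ℤ) :
    ((∀ i, u' i = (u' i).bmod Q₀) ∧ (∀ i, e i = (u' i).bmod p) ∧
      (∃ v : Fin n → ℤ, x' = fun i => (q : ℤ) * v i + (u' i - e i) / (p : ℤ)))
    ↔ ((∀ i, e i = (e i).bmod p) ∧ ∀ i, u' i = (e i + (p : ℤ) * x' i).bmod Q₀) := by
  subst hQ₀
  have hskolem : (∃ v : Fin n → ℤ, x' = fun i => (q : ℤ) * v i + (u' i - e i) / p) ↔
      ∀ i, ∃ v : ℤ, x' i = q * v + (u' i - e i) / p := by
    rw [Classical.skolem]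
    simp only [funext_iff]
  rw [hskolem, ← forall_and, ← forall_and, ← forall_and]
  exact forall_congr' fun i => bmod_mul_decomposition_iff hp _ _ _

lemma div_bounds_of_mem_Icc {X A B m ε : ℝ} (hX : 0 ≤ X) (hm : 0 < m) (hε : ε < 1)
    (hA : A ∈ Set.Icc (m * (1 - ε)) (m * (1 + ε)))
    (hB : B ∈ Set.Icc (m * (1 - ε)) (m * (1 + ε))) :
    (1 - ε) / (1 + ε) * (X / B) ≤ X / A ∧ X / A ≤ (1 + ε) / (1 - ε) * (X / B) := by
  have hlow : 0 < m * (1 - ε) := mul_pos hm (by linarith)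
  have hup : 0 < m * (1 + ε) := hlow.trans_le (hA.1.trans hA.2)
  have h1ε : 0 < 1 + ε := pos_of_mul_pos_right hup hm.le
  have h1ε' : 0 < 1 - ε := by linarith
  have hA_div := div_le_div_of_nonneg_left hX (hlow.trans_le hA.1) hA.2
  have hA_div' := div_le_div_of_nonneg_left hX hlow hA.1
  have hB_div := div_le_div_of_nonneg_left hX (hlow.trans_le hB.1) hB.2
  have hB_div' := div_le_div_of_nonneg_left hX hlow hB.1
  constructor
  · calc (1 - ε) / (1 + ε) * (X / B) ≤ (1 - ε) / (1 + ε) * (X / (m * (1 - ε))) := by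
          gcongr
      _ = X / (m * (1 + ε)) := by field_simp
      _ ≤ X / A := hA_div
  · calc X / A ≤ X / (m * (1 - ε)) := hA_div'
      _ = (1 + ε) / (1 - ε) * (X / (m * (1 + ε))) := by field_simp
      _ ≤ (1 + ε) / (1 - ε) * (X / B) := by
          gcongr

theorem stmt_2_general (n : ℕ) (p q : ℕ) (hp : 0 < p) (hq : 0 < q)
    (Q₀ : ℕ) (hQ₀ : Q₀ = p * q) (ε r : ℝ) (hε : ε ∈ Set.Ioo (0 : ℝ) (1/2)) (hr : 0 < r)
    (hsmooth : rhoZn n ((q : ℝ) / r) ≤ 1 + ε) :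
    (∀ x' u' e : Fin n → ℤ,
        (Dist1 n p q Q₀ r x' u' e ≠ 0 ↔
          ((∀ i, e i = (e i).bmod p) ∧ ∀ i, u' i = (e i + (p : ℤ) * x' i).bmod Q₀))
      ∧ (Dist2 n p q Q₀ r x' u' e ≠ 0 ↔
          ((∀ i, e i = (e i).bmod p) ∧ ∀ i, u' i = (e i + (p : ℤ) * x' i).bmod Q₀)))
    ∧ (∀ x' u' e : Fin n → ℤ,
        (1 - ε)/(1 + ε) * Dist2 n p q Q₀ r x' u' e ≤ Dist1 n p q Q₀ r x' u' e
      ∧ Dist1 n p q Q₀ r x' u' e ≤ (1 + ε)/(1 - ε) * Dist2 n p q Q₀ r x' u' e) := by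
  have hε1 : ε < 1 := by linarith [hε.2]
  have hq' : (0 : ℝ) < q := by exact_mod_cast hq
  have hQ' : (0 : ℝ) < Q₀ := by rw [hQ₀]; positivity
  have hcoset := pow_mul_rhoCoset_mem_Icc n hr hq hε1.le hsmooth
  have hZ := rhoZn_mem_Icc n hr hq hε1.le hsmooth
  have hlow : 0 < r ^ n * (1 - ε) := mul_pos (pow_pos hr n) (by linarith)
  have hcoset_pos (c : Fin n → ℤ) : 0 < rhoCoset n r q c :=
    pos_of_mul_pos_right (hlow.trans_le (hcoset c).1) (by positivity)
  refine ⟨fun x' u' e => ⟨?_, ?_⟩, fun x' u' e => ?_⟩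
  · rw [Dist1, ite_ne_right_iff, dist1_cond_iff_dist2_cond hp hQ₀,
      and_iff_left (div_pos (mul_pos (by positivity) (gaussF_pos _ _ _)) (hcoset_pos _)).ne']
  · rw [Dist2, ite_ne_right_iff,
      and_iff_left (div_pos (mul_pos (by positivity) (gaussF_pos _ _ _)) (hlow.trans_le hZ.1)).ne']
  by_cases h : (∀ i, e i = (e i).bmod p) ∧ ∀ i, u' i = (e i + (p : ℤ) * x' i).bmod Q₀
  · rw [Dist1, Dist2, if_pos ((dist1_cond_iff_dist2_cond hp hQ₀ x' u' e).2 h), if_pos h]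
    set G := gaussF n r (fun i => (x' i : ℝ))
    set C := rhoCoset n r q (fun i => (u' i - e i) / p)
    rw [show 1 / (Q₀ : ℝ) ^ n * G / C = (q : ℝ) ^ n / (Q₀ : ℝ) ^ n * G / ((q : ℝ) ^ n * C) by
      field_simp]
    exact div_bounds_of_mem_Icc (mul_nonneg (by positivity) (gaussF_pos _ _ _).le) (pow_pos hr n) hε1
      (hcoset _) hZ
  · rw [Dist1, Dist2, if_neg (mt (dist1_cond_iff_dist2_cond hp hQ₀ x' u' e).1 h), if_neg h]
    simp

/-- **Simulatability of the semi-random gadget sampler** (instantiation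
`P = p·I_n`, `Q = q·I_n`, `Q₀ = p·q`).  If `r ≥ η_ε(q·ℤⁿ)`, i.e.
`ρ_{q/r}(ℤⁿ) ≤ 1 + ε`, then the two distributions on triples `(x', u', e)` have
the same support `{(x', u', e) : u' = e + p·x' mod Q₀}` (with `e ∈ ℤ_pⁿ`,
`u' ∈ ℤ_{Q₀}ⁿ` centered), and on every triple the probability under
Distribution 1 is within a factor `[(1-ε)/(1+ε), (1+ε)/(1-ε)]` of the
probability under Distribution 2. -/
theorem stmt_2 (n : ℕ) (hn : 1 ≤ n) (p q : ℕ) (hp : 0 < p) (hq : 0 < q)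
    (Q₀ : ℕ) (hQ₀ : Q₀ = p * q) (ε r : ℝ) (hε : ε ∈ Set.Ioo (0 : ℝ) (1/2)) (hr : 0 < r)
    (hsmooth : rhoZn n ((q : ℝ) / r) ≤ 1 + ε) :
    (∀ x' u' e : Fin n → ℤ,
        (Dist1 n p q Q₀ r x' u' e ≠ 0 ↔
          ((∀ i, e i = (e i).bmod p) ∧ ∀ i, u' i = (e i + (p : ℤ) * x' i).bmod Q₀))
      ∧ (Dist2 n p q Q₀ r x' u' e ≠ 0 ↔
          ((∀ i, e i = (e i).bmod p) ∧ ∀ i, u' i = (e i + (p : ℤ) * x' i).bmod Q₀)))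
    ∧ (∀ x' u' e : Fin n → ℤ,
        (1 - ε)/(1 + ε) * Dist2 n p q Q₀ r x' u' e ≤ Dist1 n p q Q₀ r x' u' e
      ∧ Dist1 n p q Q₀ r x' u' e ≤ (1 + ε)/(1 - ε) * Dist2 n p q Q₀ r x' u' e) :=
  stmt_2_general n p q hp hq Q₀ hQ₀ ε r hε hr hsmooth
end

section
/- Let T ∈ ℝ^{m×n}, and let σ, η, r, s be real numbers with ‖T·x‖ ≤ σ·‖x‖ for all x ∈ ℝⁿ (i.e. σ is at least the largest singular value of T), 0 < η ≤ r, and s² ≥ (r² + η²)·(σ² + 1). Then the symmetric matrix s²·TᵀT − r²·(TᵀT)² + r²·I_n − η²·(TᵀT + I_n)² is positive semidefinite. -/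
/-!
With `A = TᵀT`, the matrix is `p(A)` for `p(λ) = s²λ - r²λ² + r² - η²(λ + 1)²`, and
`p(λ) = (r² + η²)(σ²λ - λ²) + (s² - (r² + η²)σ² - 2η²)λ + (r² - η²)`,
where both scalar coefficients after the first are nonnegative by the hypotheses. So no
diagonalisation is needed: it suffices that `σ²A - A²` is positive semidefinite, i.e.
`‖Ax‖ ≤ σ‖Tx‖`, which follows from Cauchy–Schwarz in the form
`‖Ax‖² = ⟨T(Ax), Tx⟩ ≤ ‖T(Ax)‖‖Tx‖ ≤ σ‖Ax‖‖Tx‖`.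
-/

open Matrix

lemma dotProduct_transpose_mul_mulVec {m n R : Type*} [Fintype m] [Fintype n] [CommSemiring R]
    (T : Matrix m n R) (z x : n → R) :
    z ⬝ᵥ ((Tᵀ * T) *ᵥ x) = (T *ᵥ z) ⬝ᵥ (T *ᵥ x) := by
  rw [← mulVec_mulVec, dotProduct_mulVec, vecMul_transpose]

section OrderedRing

variable {m n R : Type*} [Fintype m] [Fintype n] [CommRing R] [LinearOrder R]
  [IsStrictOrderedRing R]

lemma dotProduct_self_nonneg (v : n → R) : 0 ≤ v ⬝ᵥ v :=
  Finset.sum_nonneg fun i _ ↦ mul_self_nonneg (v i)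

lemma dotProduct_sq_le_dotProduct_self_mul (u v : n → R) :
    (u ⬝ᵥ v) ^ 2 ≤ (u ⬝ᵥ u) * (v ⬝ᵥ v) := by
  simpa only [dotProduct, sq] using Finset.sum_mul_sq_le_sq_mul_sq Finset.univ u v

lemma dotProduct_gram_mulVec_self_le {T : Matrix m n R} {σ : R}
    (hT : ∀ x, (T *ᵥ x) ⬝ᵥ (T *ᵥ x) ≤ σ ^ 2 * (x ⬝ᵥ x)) (x : n → R) :
    ((Tᵀ * T) *ᵥ x) ⬝ᵥ ((Tᵀ * T) *ᵥ x) ≤ σ ^ 2 * ((T *ᵥ x) ⬝ᵥ (T *ᵥ x)) := by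
  set z := (Tᵀ * T) *ᵥ x
  have hCS : (z ⬝ᵥ z) ^ 2 ≤ σ ^ 2 * (z ⬝ᵥ z) * ((T *ᵥ x) ⬝ᵥ (T *ᵥ x)) :=
    calc (z ⬝ᵥ z) ^ 2 ≤ ((T *ᵥ z) ⬝ᵥ (T *ᵥ z)) * ((T *ᵥ x) ⬝ᵥ (T *ᵥ x)) :=
          dotProduct_transpose_mul_mulVec T z x ▸ dotProduct_sq_le_dotProduct_self_mul _ _
      _ ≤ _ := mul_le_mul_of_nonneg_right (hT z) (dotProduct_self_nonneg _)
  nlinarith [dotProduct_self_nonneg z, mul_nonneg (sq_nonneg σ) (dotProduct_self_nonneg (T *ᵥ x))]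

end OrderedRing

section Real

variable {m n : Type*} [Fintype m] [Fintype n]

lemma dotProduct_mulVec_self_le_of_sqrt_le {T : Matrix m n ℝ} {σ : ℝ}
    (hT : ∀ x : n → ℝ, √(∑ i, (T *ᵥ x) i ^ 2) ≤ σ * √(∑ i, x i ^ 2)) (x : n → ℝ) :
    (T *ᵥ x) ⬝ᵥ (T *ᵥ x) ≤ σ ^ 2 * (x ⬝ᵥ x) := by
  have hsq := pow_le_pow_left₀ (Real.sqrt_nonneg _) (hT x) 2
  rw [mul_pow, Real.sq_sqrt (by positivity), Real.sq_sqrt (by positivity)] at hsq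
  simpa only [dotProduct, sq] using hsq

lemma posSemidef_transpose_mul_self_real (T : Matrix m n ℝ) : (Tᵀ * T).PosSemidef := by
  simpa using posSemidef_conjTranspose_mul_self T

lemma posSemidef_smul_gram_sub_gram_sq [DecidableEq n] {T : Matrix m n ℝ} {σ : ℝ}
    (hT : ∀ x, (T *ᵥ x) ⬝ᵥ (T *ᵥ x) ≤ σ ^ 2 * (x ⬝ᵥ x)) :
    (σ ^ 2 • (Tᵀ * T) - (Tᵀ * T) ^ 2).PosSemidef := by
  have hA := (posSemidef_transpose_mul_self_real T).isHermitian
  refine .of_dotProduct_mulVec_nonneg ((hA.smul (.all _)).sub (hA.pow 2)) fun x ↦ ?_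
  have hsq : x ⬝ᵥ ((Tᵀ * T) ^ 2 *ᵥ x) = ((Tᵀ * T) *ᵥ x) ⬝ᵥ ((Tᵀ * T) *ᵥ x) := by
    rw [sq, ← mulVec_mulVec, dotProduct_mulVec, ← mulVec_transpose, transpose_mul,
      transpose_transpose]
  rw [star_trivial, sub_mulVec, smul_mulVec, dotProduct_sub, dotProduct_smul, hsq,
    dotProduct_transpose_mul_mulVec, smul_eq_mul, sub_nonneg]
  exact dotProduct_gram_mulVec_self_le hT x

end Real

/-- **Matrix smoothing inequality.** If `σ` bounds the largest singular value of
`T` (i.e. `‖T·x‖ ≤ σ·‖x‖` for all `x`), `0 < η ≤ r` and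
`s² ≥ (r² + η²)(σ² + 1)`, then
`s²·TᵀT - r²·(TᵀT)² + r²·I_n - η²·(TᵀT + I_n)²` is positive semidefinite. -/
theorem stmt_6 (m n : ℕ) (T : Matrix (Fin m) (Fin n) ℝ) (σ η r s : ℝ)
    (hT : ∀ x : Fin n → ℝ,
      Real.sqrt (∑ i, (T.mulVec x i) ^ 2) ≤ σ * Real.sqrt (∑ i, (x i) ^ 2))
    (hη : 0 < η) (hηr : η ≤ r)
    (hs : s ^ 2 ≥ (r ^ 2 + η ^ 2) * (σ ^ 2 + 1)) :
    (s ^ 2 • (T.transpose * T) - r ^ 2 • (T.transpose * T) ^ 2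
        + r ^ 2 • (1 : Matrix (Fin n) (Fin n) ℝ)
        - η ^ 2 • (T.transpose * T + 1) ^ 2).PosSemidef := by
  have hηr2 : η ^ 2 ≤ r ^ 2 := pow_le_pow_left₀ hη.le hηr 2
  have hdecomp : s ^ 2 • (Tᵀ * T) - r ^ 2 • (Tᵀ * T) ^ 2 + r ^ 2 • (1 : Matrix (Fin n) (Fin n) ℝ)
      - η ^ 2 • (Tᵀ * T + 1) ^ 2 = (r ^ 2 + η ^ 2) • (σ ^ 2 • (Tᵀ * T) - (Tᵀ * T) ^ 2)
        + (s ^ 2 - (r ^ 2 + η ^ 2) * σ ^ 2 - 2 * η ^ 2) • (Tᵀ * T) + (r ^ 2 - η ^ 2) • 1 := by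
    simp only [sq, add_mul, mul_add, mul_one, one_mul]
    module
  have hgram := posSemidef_smul_gram_sub_gram_sq (dotProduct_mulVec_self_le_of_sqrt_le hT)
  rw [hdecomp]
  exact ((hgram.smul (by positivity)).add
    ((posSemidef_transpose_mul_self_real T).smul (by nlinarith))).add
    (PosSemidef.one.smul (by linarith))
end

section
/- Let Q₀ be a positive integer, and let P, Q ∈ ℤ^{n×n} with P·Q = Q₀·I_n. Let A ∈ ℤ^{n×m} and T ∈ ℤ^{m×n} satisfy A·T ≡ P (mod Q₀) entrywise. Let u ∈ ℤⁿ be a target, p ∈ ℤᵐ arbitrary, and set u′ = u − A·p. Suppose e, c ∈ ℤⁿ satisfy u′ − e = P·c, and let x′ ∈ Q·ℤⁿ + c. Then x = p + T·x′ satisfies A·x ≡ u − e (mod Q₀). (Correctness of the approximate preimage sampling algorithm PreSamp: the output x is an approximate preimage of u under f_A with error exactly e.) -/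
/-- **Correctness of the approximate preimage sampling algorithm `PreSamp`.**
If `A·T ≡ P (mod Q₀)`, `P·Q = Q₀·I_n`, `u' = u - A·p`, `u' - e = P·c`, and
`x' ∈ Q·ℤⁿ + c`, then `x = p + T·x'` satisfies `A·x ≡ u - e (mod Q₀)`. -/
theorem stmt_8 (n m : ℕ) (Q₀ : ℤ) (hQ₀ : 0 < Q₀)
    (P Q : Matrix (Fin n) (Fin n) ℤ)
    (hPQ : P * Q = Q₀ • (1 : Matrix (Fin n) (Fin n) ℤ))
    (A : Matrix (Fin n) (Fin m) ℤ) (T : Matrix (Fin m) (Fin n) ℤ)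
    (hAT : ∀ i j, Q₀ ∣ ((A * T) i j - P i j))
    (u : Fin n → ℤ) (p : Fin m → ℤ) (u' : Fin n → ℤ) (hu' : u' = u - A.mulVec p)
    (e c : Fin n → ℤ) (hec : u' - e = P.mulVec c)
    (x' : Fin n → ℤ) (hx' : ∃ v : Fin n → ℤ, x' = Q.mulVec v + c) :
    ∀ i, Q₀ ∣ (A.mulVec (p + T.mulVec x') i - (u - e) i) := by
  intro i
  obtain ⟨v, rfl⟩ := hx'
  have h1 : A.mulVec (p + T.mulVec (Q.mulVec v + c))
      = A.mulVec p + (A * T).mulVec (Q.mulVec v + c) := by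
    rw [Matrix.mulVec_add, Matrix.mulVec_mulVec]
  have h2 : P.mulVec (Q.mulVec v + c) = Q₀ • v + P.mulVec c := by
    rw [Matrix.mulVec_add, Matrix.mulVec_mulVec, hPQ, Matrix.smul_mulVec,
      Matrix.one_mulVec]
  have h3 : Q₀ ∣ ((A * T).mulVec (Q.mulVec v + c) i - P.mulVec (Q.mulVec v + c) i) := by
    have : (A * T).mulVec (Q.mulVec v + c) i - P.mulVec (Q.mulVec v + c) i
        = ∑ j, ((A * T) i j - P i j) * (Q.mulVec v + c) j := by
      simp [Matrix.mulVec, dotProduct, Finset.sum_sub_distrib, sub_mul]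
    rw [this]
    exact Finset.dvd_sum fun j _ => Dvd.dvd.mul_right (hAT i j) _
  have hPc : P.mulVec c i = u i - A.mulVec p i - e i := by
    have := congrFun hec i
    simp [hu'] at this
    linarith
  obtain ⟨k, hk⟩ := h3
  refine ⟨v i + k, ?_⟩
  have h2i := congrFun h2 i
  have h1i := congrFun h1 i
  simp only [Pi.add_apply, Pi.smul_apply, smul_eq_mul] at h1i h2i
  simp only [Pi.sub_apply]
  rw [h1i]
  linarith [hk, h2i, hPc]
end

section
/- Let Q₀ ≥ 1 and m > n ≥ 1 be integers, let A′ ∈ ℤ^{n×(m−n)}, and let A = [I_n | A′] be in Hermite normal form. Suppose u ∈ ℤⁿ, x = (x₀, x₁) ∈ ℤⁿ × ℤ^{m−n}, and e ∈ ℤⁿ satisfy A·x ≡ u − e (mod Q₀), ‖x‖ ≤ β, and ‖e‖ ≤ α. Then x* = (x₀ + e, x₁) ∈ ℤᵐ satisfies A·x* ≡ u (mod Q₀) and ‖x*‖ ≤ α + β. (Any approximate ISIS solution for a public matrix in Hermite normal form can be converted into an exact ISIS solution with norm at most α + β; this is the nontrivial direction of the equivalence HNF.ISIS_{n,m,Q,α+β}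 ≤ HNF.ApproxISIS_{n,m,Q,α,β}.) -/
/-!
Since `A = [I_n | A']`, the error `e` can be absorbed into the first block of `x`:
`A · (x₀ + e, x₁) = A · x + e`. The new vector is `x + (e, 0)`, so its norm is at most
`‖x‖ + ‖e‖` by the triangle inequality in `ℝ^{n+k}`.
-/

open Matrix

theorem Matrix.fromCols_one_mulVec_sumElim {R m n : Type*} [Semiring R] [Fintype m] [Fintype n]
    [DecidableEq m] (A' : Matrix m n R) (y : m → R) (z : n → R) :
    fromCols (1 : Matrix m m R) A' *ᵥ Sum.elim y z = y + A' *ᵥ z := by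
  rw [fromCols_mulVec_sumElim, one_mulVec]

theorem EuclideanSpace.norm_toLp_sumElim {ι κ : Type*} [Fintype ι] [Fintype κ]
    (f : ι → ℝ) (g : κ → ℝ) :
    ‖(WithLp.toLp 2 (Sum.elim f g) : EuclideanSpace ℝ (ι ⊕ κ))‖
      = √(∑ i, f i ^ 2 + ∑ j, g j ^ 2) := by
  rw [EuclideanSpace.norm_eq, Fintype.sum_sum_type]
  simp only [Sum.elim_inl, Sum.elim_inr, Real.norm_eq_abs, sq_abs]

theorem Real.sqrt_sum_sq_add_le {ι κ : Type*} [Fintype ι] [Fintype κ]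
    (f h : ι → ℝ) (g : κ → ℝ) :
    √(∑ i, (f i + h i) ^ 2 + ∑ j, g j ^ 2)
      ≤ √(∑ i, f i ^ 2 + ∑ j, g j ^ 2) + √(∑ i, h i ^ 2) := by
  have hsplit : Sum.elim (f + h) g = Sum.elim f g + Sum.elim h (0 : κ → ℝ) := by
    ext (i | j) <;> simp
  have := norm_add_le (WithLp.toLp 2 (Sum.elim f g) : EuclideanSpace ℝ (ι ⊕ κ))
    (WithLp.toLp 2 (Sum.elim h 0))
  rw [← WithLp.toLp_add, ← hsplit] at this
  simpa only [EuclideanSpace.norm_toLp_sumElim, Pi.add_apply, Pi.zero_apply, zero_pow two_ne_zero,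
    Finset.sum_const_zero, add_zero] using this

theorem stmt_9_general (Q₀ : ℤ) (n k : ℕ)
    (A' : Matrix (Fin n) (Fin k) ℤ) (α β : ℝ)
    (u x₀ e : Fin n → ℤ) (x₁ : Fin k → ℤ)
    (hcong : ∀ i, Q₀ ∣
      ((Matrix.fromCols (1 : Matrix (Fin n) (Fin n) ℤ) A').mulVec (Sum.elim x₀ x₁) i
        - (u i - e i)))
    (hx : Real.sqrt ((∑ i, ((x₀ i : ℝ)) ^ 2) + ∑ j, ((x₁ j : ℝ)) ^ 2) ≤ β)
    (he : Real.sqrt (∑ i, ((e i : ℝ)) ^ 2) ≤ α) :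
    (∀ i, Q₀ ∣
      ((Matrix.fromCols (1 : Matrix (Fin n) (Fin n) ℤ) A').mulVec (Sum.elim (x₀ + e) x₁) i
        - u i))
    ∧ Real.sqrt ((∑ i, ((x₀ i + e i : ℤ) : ℝ) ^ 2) + ∑ j, ((x₁ j : ℝ)) ^ 2) ≤ α + β := by
  refine ⟨fun i => ?_, ?_⟩
  · have h := hcong i
    simp only [fromCols_one_mulVec_sumElim, Pi.add_apply] at h ⊢
    convert h using 1
    ring
  · push_cast
    calc _ ≤ √(∑ i, (x₀ i : ℝ) ^ 2 + ∑ j, (x₁ j : ℝ) ^ 2) + √(∑ i, (e i : ℝ) ^ 2) :=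
          Real.sqrt_sum_sq_add_le _ _ _
      _ ≤ α + β := by linarith

/-- **From approximate ISIS solutions to exact ISIS solutions in HNF.**
For `A = [I_n | A']` in Hermite normal form (`m = n + k`, `k = m - n ≥ 1`), if
`A·x ≡ u - e (mod Q₀)` with `x = (x₀, x₁)`, `‖x‖ ≤ β` and `‖e‖ ≤ α`, then
`x* = (x₀ + e, x₁)` satisfies `A·x* ≡ u (mod Q₀)` and `‖x*‖ ≤ α + β`. -/
theorem stmt_9 (Q₀ : ℤ) (hQ₀ : 1 ≤ Q₀) (n k : ℕ) (hn : 1 ≤ n) (hk : 1 ≤ k)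
    (A' : Matrix (Fin n) (Fin k) ℤ) (α β : ℝ)
    (u x₀ e : Fin n → ℤ) (x₁ : Fin k → ℤ)
    (hcong : ∀ i, Q₀ ∣
      ((Matrix.fromCols (1 : Matrix (Fin n) (Fin n) ℤ) A').mulVec (Sum.elim x₀ x₁) i
        - (u i - e i)))
    (hx : Real.sqrt ((∑ i, ((x₀ i : ℝ)) ^ 2) + ∑ j, ((x₁ j : ℝ)) ^ 2) ≤ β)
    (he : Real.sqrt (∑ i, ((e i : ℝ)) ^ 2) ≤ α) :
    (∀ i, Q₀ ∣
      ((Matrix.fromCols (1 : Matrix (Fin n) (Fin n) ℤ) A').mulVec (Sum.elim (x₀ + e) x₁) i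
        - u i))
    ∧ Real.sqrt ((∑ i, ((x₀ i + e i : ℤ) : ℝ) ^ 2) + ∑ j, ((x₁ j : ℝ)) ^ 2) ≤ α + β :=
  stmt_9_general Q₀ n k A' α β u x₀ e x₁ hcong hx he
end

section
/- Let n ≥ 1, let R = ℤ[x]/(xⁿ − 1), let Q₀ be a positive integer, γ ≥ 1, and β > 0, and let h ∈ R. Suppose z₀*, z₁*, e*, z₁, z₀′ ∈ R satisfy: z₀* + h·z₁* + e* ≡ u (mod Q₀), z₀′ ≡ u − h·z₁ (mod Q₀), ‖(v(z₀* + e*), γ·v(z₁*))‖ ≤ β, ‖(v(z₀′), γ·v(z₁))‖ ≤ β, and z₁ ≠ z₁*. Then the pair (x₀, x₁) = (z₀* + e* − z₀′, z₁* − z₁) is nonzero, satisfies x₀ + h·x₁ ≡ 0 (mod Q₀), and ‖(v(x₀), γ·v(x₁))‖ ≤ 2β. (A signature forgery colliding with a simulated transcript on the same hash target yields a solution to the NTRU-SIS problem in the twisted norm with bound 2β; this is the core of the strong EU-CMA security reduction for the Robin signature scheme.) -/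
/-- The ring `R = ℤ[x]/(xⁿ - 1)`, realized as the group algebra `ℤ[ℤ/nℤ]`;
the coefficient vector of `a : Rpoly n` is `fun i => a i`. -/
abbrev Rpoly (n : ℕ) : Type := AddMonoidAlgebra ℤ (ZMod n)

/-- The twisted norm `‖(v(a), γ·v(b))‖` of a pair of elements of `R`. -/
noncomputable def twistedNorm (n : ℕ) [NeZero n] (γ : ℝ) (a b : Rpoly n) : ℝ :=
  Real.sqrt ((∑ i : ZMod n, ((a.coeff i : ℝ)) ^ 2) + ∑ i : ZMod n, (γ * ((b.coeff i : ℝ))) ^ 2)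

/-- Coefficientwise congruence `a ≡ b (mod Q₀)` in `R`. -/
def congMod (n : ℕ) [NeZero n] (Q₀ : ℤ) (a b : Rpoly n) : Prop :=
  ∀ i : ZMod n, Q₀ ∣ (a - b).coeff i

/-! The collision argument: the two congruences share the target `u`, so their difference
cancels it, and the twisted norm is a Euclidean norm, so the bound `2β` is the triangle
inequality. -/

noncomputable def twistedVec (n : ℕ) [NeZero n] (γ : ℝ) (a b : Rpoly n) :
    EuclideanSpace ℝ (ZMod n ⊕ ZMod n) :=
  WithLp.toLp 2 (Sum.elim (fun i => (a.coeff i : ℝ)) (fun i => γ * (b.coeff i : ℝ)))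

section

variable {n : ℕ} [NeZero n]

theorem twistedNorm_eq_norm_twistedVec (γ : ℝ) (a b : Rpoly n) :
    twistedNorm n γ a b = ‖twistedVec n γ a b‖ := by
  rw [EuclideanSpace.norm_eq, twistedNorm, Fintype.sum_sum_type]
  simp [twistedVec, mul_pow, sq_abs]

theorem twistedVec_sub (γ : ℝ) (a b a' b' : Rpoly n) :
    twistedVec n γ (a - a') (b - b') = twistedVec n γ a b - twistedVec n γ a' b' := by
  ext (i | i) <;> simp [twistedVec, AddMonoidAlgebra.coeff_sub, mul_sub]

theorem twistedNorm_sub_le (γ : ℝ) (a b a' b' : Rpoly n) :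
    twistedNorm n γ (a - a') (b - b') ≤ twistedNorm n γ a b + twistedNorm n γ a' b' := by
  simp only [twistedNorm_eq_norm_twistedVec, twistedVec_sub]
  exact norm_sub_le _ _

theorem congMod.sub {Q₀ : ℤ} {a b a' b' : Rpoly n} (h : congMod n Q₀ a b)
    (h' : congMod n Q₀ a' b') : congMod n Q₀ (a - a') (b - b') := fun i => by
  rw [show a - a' - (b - b') = (a - b) - (a' - b') by abel, AddMonoidAlgebra.coeff_sub]
  exact dvd_sub (h i) (h' i)

theorem congMod.of_sub_eq {Q₀ : ℤ} {a b a' b' : Rpoly n} (h : congMod n Q₀ a b)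
    (e : a - b = a' - b') : congMod n Q₀ a' b' := fun i => e ▸ h i

end

theorem stmt_10_general (n : ℕ) [NeZero n] (Q₀ : ℤ)
    (γ β : ℝ)
    (h u z₀s z₁s es z₁ z₀' : Rpoly n)
    (h1 : congMod n Q₀ (z₀s + h * z₁s + es) u)
    (h2 : congMod n Q₀ z₀' (u - h * z₁))
    (h3 : twistedNorm n γ (z₀s + es) z₁s ≤ β)
    (h4 : twistedNorm n γ z₀' z₁ ≤ β)
    (h5 : z₁ ≠ z₁s) :
    ¬(z₀s + es - z₀' = 0 ∧ z₁s - z₁ = 0)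
    ∧ congMod n Q₀ ((z₀s + es - z₀') + h * (z₁s - z₁)) 0
    ∧ twistedNorm n γ (z₀s + es - z₀') (z₁s - z₁) ≤ 2 * β := by
  refine ⟨fun ⟨_, hx₁⟩ => h5 (sub_eq_zero.mp hx₁).symm, ?_, ?_⟩
  · exact (h1.sub h2).of_sub_eq (by ring)
  · linarith [twistedNorm_sub_le γ (z₀s + es) z₁s z₀' z₁]

/-- **Core of the strong EU-CMA security reduction for Robin.**
A forgery `(z₀', z₁)` colliding with a simulated transcript `(z₀*, z₁*, e*)` on
the same hash target `u` (with `z₁ ≠ z₁*`) yields a nonzero solution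
`(x₀, x₁) = (z₀* + e* - z₀', z₁* - z₁)` to the NTRU-SIS problem in the twisted
norm with bound `2β`: `x₀ + h·x₁ ≡ 0 (mod Q₀)` and `‖(v(x₀), γ·v(x₁))‖ ≤ 2β`. -/
theorem stmt_10 (n : ℕ) [NeZero n] (hn : 1 ≤ n) (Q₀ : ℤ) (hQ₀ : 0 < Q₀)
    (γ β : ℝ) (hγ : 1 ≤ γ) (hβ : 0 < β)
    (h u z₀s z₁s es z₁ z₀' : Rpoly n)
    (h1 : congMod n Q₀ (z₀s + h * z₁s + es) u)
    (h2 : congMod n Q₀ z₀' (u - h * z₁))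
    (h3 : twistedNorm n γ (z₀s + es) z₁s ≤ β)
    (h4 : twistedNorm n γ z₀' z₁ ≤ β)
    (h5 : z₁ ≠ z₁s) :
    ¬(z₀s + es - z₀' = 0 ∧ z₁s - z₁ = 0)
    ∧ congMod n Q₀ ((z₀s + es - z₀') + h * (z₁s - z₁)) 0
    ∧ twistedNorm n γ (z₀s + es - z₀') (z₁s - z₁) ≤ 2 * β :=
  stmt_10_general n Q₀ γ β h u z₀s z₁s es z₁ z₀' h1 h2 h3 h4 h5
end
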